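/- The subalgebra F of functions on G† is stable under the infinitesimal translation action: for every f ∈ F and every 1 ≤ ℓ ≤ n, the function on G† given by ψ ↦ (d/dt)|_{t=0} f(ψ ◁ τ_{t e_ℓ}), where (ψ ◁ τ_b)(x) = ψ(x + b) − ψ(b) and e_ℓ is the ℓ-th standard basis vector, is well defined (the derivative exists) and again belongs to F; on the generators it is given by β^i_{j₁…j_k} ↦ β^i_{j₁…j_k ℓ}. -/

import Mathlib

/-- A `C^∞` diffeomorphism of `ℝⁿ` (modeled as `Fin n → ℝ`). -/
structure Diffeo (n : ℕ) where
  toFun : (Fin n → ℝ) → (Fin n → ℝ)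
  invFun : (Fin n → ℝ) → (Fin n → ℝ)
  smooth : ContDiff ℝ (⊤ : ℕ∞) toFun
  smooth_inv : ContDiff ℝ (⊤ : ℕ∞) invFun
  left_inv : Function.LeftInverse invFun toFun
  right_inv : Function.RightInverse invFun toFun

/-- Composition of diffeomorphisms. -/
def Diffeo.comp {n : ℕ} (φ ψ : Diffeo n) : Diffeo n where
  toFun := φ.toFun ∘ ψ.toFun
  invFun := ψ.invFun ∘ φ.invFun
  smooth := φ.smooth.comp ψ.smooth
  smooth_inv := ψ.smooth_inv.comp φ.smooth_inv
  left_inv := fun x => by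
    simp only [Function.comp_apply]
    rw [φ.left_inv (ψ.toFun x), ψ.left_inv x]
  right_inv := fun y => by
    simp only [Function.comp_apply]
    rw [ψ.right_inv (φ.invFun y), φ.right_inv y]

/-- The group `G†` of `C^∞` diffeomorphisms of `ℝⁿ` fixing `0`. -/
def Gd (n : ℕ) := {ψ : Diffeo n // ψ.toFun 0 = 0}

/-- Composition in `G†`. -/
def Gd.comp {n : ℕ} (ψ₁ ψ₂ : Gd n) : Gd n :=
  ⟨ψ₁.val.comp ψ₂.val, by
    show ψ₁.val.toFun (ψ₂.val.toFun 0) = 0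
    rw [ψ₂.prop, ψ₁.prop]⟩

/-- The inverse of a diffeomorphism. -/
def Diffeo.symm {n : ℕ} (ψ : Diffeo n) : Diffeo n :=
  ⟨ψ.invFun, ψ.toFun, ψ.smooth_inv, ψ.smooth, ψ.right_inv, ψ.left_inv⟩

/-- Inversion in `G†`. -/
def Gd.inv {n : ℕ} (ψ : Gd n) : Gd n :=
  ⟨ψ.val.symm, by
    show ψ.val.invFun 0 = 0
    have h := ψ.val.left_inv 0
    rw [ψ.prop] at h
    exact h⟩

/-- Partial derivative in the `j`-th coordinate direction. -/
noncomputable def pd {n : ℕ} (j : Fin n) (f : (Fin n → ℝ) → ℝ) : (Fin n → ℝ) → ℝ :=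
  fun x => fderiv ℝ f x (Pi.single j 1)

/-- Iterated partial derivative `∂_{j_k}⋯∂_{j_1}`, with `j 0 = j_1` applied first. -/
noncomputable def itpd {n : ℕ} :
    ∀ {k : ℕ}, (Fin k → Fin n) → ((Fin n → ℝ) → ℝ) → ((Fin n → ℝ) → ℝ)
  | 0, _, f => f
  | _ + 1, j, f => itpd (fun m => j m.succ) (pd (j 0) f)

/-- The Taylor coordinate `β^i_{j_1…j_k}(ψ) = ∂_{j_k}⋯∂_{j_1}ψ^i(0)` on `G†`. -/
noncomputable def betaGen {n : ℕ} (k : ℕ) (j : Fin k → Fin n) (i : Fin n) : Gd n → ℝ :=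
  fun ψ => itpd j (fun x => ψ.val.toFun x i) 0

/-- The function `β^{-1}(ψ) = det(Dψ(0))⁻¹` on `G†`. -/
noncomputable def betaInv {n : ℕ} : Gd n → ℝ :=
  fun ψ => (Matrix.det (Matrix.of fun i j : Fin n => pd j (fun x => ψ.val.toFun x i) 0))⁻¹

/-- Generators of the algebra `F` of Taylor-coordinate functions on `G†`. -/
def genSet (n : ℕ) : Set (Gd n → ℝ) :=
  {g | ∃ (k : ℕ), 1 ≤ k ∧ ∃ (j : Fin k → Fin n) (i : Fin n), g = betaGen k j i} ∪ {betaInv}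

/-- The algebra `F` of functions on `G†` generated by the Taylor coordinates
`β^i_{j_1…j_k}` and `β^{-1}`. -/
noncomputable def Falg (n : ℕ) : Subalgebra ℝ (Gd n → ℝ) := Algebra.adjoin ℝ (genSet n)

/-- The right translation action `(ψ ◁ τ_b)(x) = ψ(x + b) − ψ(b)` as a diffeomorphism. -/
noncomputable def rActD {n : ℕ} (ψ : Diffeo n) (b : Fin n → ℝ) : Diffeo n where
  toFun := fun x => ψ.toFun (x + b) - ψ.toFun b
  invFun := fun y => ψ.invFun (y + ψ.toFun b) - b
  smooth := (ψ.smooth.comp (contDiff_id.add contDiff_const)).sub contDiff_const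
  smooth_inv := (ψ.smooth_inv.comp (contDiff_id.add contDiff_const)).sub contDiff_const
  left_inv := fun x => by
    have h1 : ψ.toFun (x + b) - ψ.toFun b + ψ.toFun b = ψ.toFun (x + b) := by abel
    simp only [h1, ψ.left_inv (x + b)]
    abel
  right_inv := fun y => by
    have h1 : ψ.invFun (y + ψ.toFun b) - b + b = ψ.invFun (y + ψ.toFun b) := by abel
    simp only [h1, ψ.right_inv (y + ψ.toFun b)]
    abel

/-- The right translation action on `G†`. -/
noncomputable def rActG {n : ℕ} (ψ : Gd n) (b : Fin n → ℝ) : Gd n :=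
  ⟨rActD ψ.val b, by
    show ψ.val.toFun (0 + b) - ψ.val.toFun b = 0
    rw [zero_add, sub_self]⟩

/-- The `ℓ`-th standard basis vector of `ℝⁿ`. -/
def eVec {n : ℕ} (ℓ : Fin n) : Fin n → ℝ := Pi.single ℓ 1

/-!
Translating along `t • e_ℓ` does not touch the derivatives of order `≥ 1` except by moving the
base point, so `β^i_J(ψ ◁ τ_b) = ∂_J ψ^i(b)` and differentiating in `t` appends `ℓ` to `J`.
The functions of `F` whose infinitesimal translate exists and lies in `F` form a subalgebra
(Leibniz rule), and it is closed under inverses lying in `F`. Since `β^{-1}` is the inverse of the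
determinant of the first-order coordinates `β^i_j`, a polynomial in them that never vanishes
(`ψ` has a differentiable inverse), every generator of `F` lies in this subalgebra, hence so does
all of `F`.
-/

section CurveDerivative

variable {𝕜 X : Type*} [NontriviallyNormedField 𝕜]
  (A : Subalgebra 𝕜 (X → 𝕜)) (c : X → 𝕜 → X)

def HasCurveDerivIn (f : X → 𝕜) : Prop :=
  ∃ f' ∈ A, ∀ x, HasDerivAt (fun t => f (c x t)) (f' x) 0

def curveDerivSubalgebra (hc : ∀ x, c x 0 = x) : Subalgebra 𝕜 (X → 𝕜) where
  carrier := {f | f ∈ A ∧ HasCurveDerivIn A c f}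
  mul_mem' := by
    rintro f g ⟨hfA, f', hf'A, hf⟩ ⟨hgA, g', hg'A, hg⟩
    refine ⟨mul_mem hfA hgA, f' * g + f * g',
      add_mem (mul_mem hf'A hgA) (mul_mem hfA hg'A), fun x => ?_⟩
    have := (hf x).mul (hg x)
    rwa [hc] at this
  add_mem' := by
    rintro f g ⟨hfA, f', hf'A, hf⟩ ⟨hgA, g', hg'A, hg⟩
    exact ⟨add_mem hfA hgA, f' + g', add_mem hf'A hg'A, fun x => (hf x).add (hg x)⟩
  algebraMap_mem' r := ⟨algebraMap_mem A r, 0, zero_mem A, fun _ => hasDerivAt_const _ _⟩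

variable {A c}

lemma inv_mem_curveDerivSubalgebra {hc : ∀ x, c x 0 = x} {f : X → 𝕜}
    (hf : f ∈ curveDerivSubalgebra A c hc) (hf0 : ∀ x, f x ≠ 0) (hfA : f⁻¹ ∈ A) :
    f⁻¹ ∈ curveDerivSubalgebra A c hc := by
  obtain ⟨-, f', hf'A, hf'⟩ := hf
  refine ⟨hfA, -f' * f⁻¹ ^ 2, mul_mem (neg_mem hf'A) (pow_mem hfA 2), fun x => ?_⟩
  have := (hf' x).inv (by rw [hc]; exact hf0 x)
  rwa [hc, div_eq_mul_inv, ← inv_pow] at this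

end CurveDerivative

lemma Subalgebra.det_mem {R A ι : Type*} [CommRing R] [CommRing A] [Algebra R A]
    [Fintype ι] [DecidableEq ι] (S : Subalgebra R A) {M : Matrix ι ι A}
    (hM : ∀ i j, M i j ∈ S) : M.det ∈ S := by
  rw [Matrix.det_apply']
  exact sum_mem fun σ _ => mul_mem (intCast_mem S _) (prod_mem fun i _ => hM _ _)

section PartialDerivatives

variable {n : ℕ}

lemma pd_comp_add_right (j : Fin n) (f : (Fin n → ℝ) → ℝ) (b : Fin n → ℝ) :
    pd j (fun x => f (x + b)) = fun x => pd j f (x + b) := by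
  funext x
  simp only [pd, fderiv_comp_add_right]

lemma pd_sub_const (j : Fin n) (f : (Fin n → ℝ) → ℝ) (c : ℝ) :
    pd j (fun x => f x - c) = pd j f := by
  funext x
  simp only [pd, fderiv_sub_const]

lemma itpd_comp_add_right {k : ℕ} (j : Fin k → Fin n) (f : (Fin n → ℝ) → ℝ) (b : Fin n → ℝ) :
    itpd j (fun x => f (x + b)) = fun x => itpd j f (x + b) := by
  induction k generalizing f with
  | zero => rfl
  | succ k ih => simp only [itpd, pd_comp_add_right, ih]

lemma itpd_snoc {k : ℕ} (j : Fin k → Fin n) (ℓ : Fin n) (f : (Fin n → ℝ) → ℝ) :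
    itpd (Fin.snoc j ℓ) f = pd ℓ (itpd j f) := by
  induction k generalizing f with
  | zero => rfl
  | succ k ih =>
    have h0 : (Fin.snoc j ℓ : Fin (k + 2) → Fin n) 0 = j 0 := Fin.snoc_castSucc (i := 0) ..
    have hsucc : (fun m : Fin (k + 1) => (Fin.snoc j ℓ : Fin (k + 2) → Fin n) m.succ) =
        Fin.snoc (fun m : Fin k => j m.succ) ℓ := by
      funext m
      refine Fin.lastCases ?_ (fun m => ?_) m
      · simp only [Fin.succ_last, Fin.snoc_last]
      · simp only [Fin.succ_castSucc, Fin.snoc_castSucc]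
    rw [itpd.eq_2, itpd.eq_2 (j := j), h0, hsucc, ih]

lemma ContDiff.pd {f : (Fin n → ℝ) → ℝ} (hf : ContDiff ℝ (⊤ : ℕ∞) f) (j : Fin n) :
    ContDiff ℝ (⊤ : ℕ∞) (pd j f) :=
  (hf.fderiv_right (m := (⊤ : ℕ∞)) (by exact_mod_cast le_top)).clm_apply contDiff_const

lemma ContDiff.itpd {f : (Fin n → ℝ) → ℝ} (hf : ContDiff ℝ (⊤ : ℕ∞) f) {k : ℕ}
    (j : Fin k → Fin n) : ContDiff ℝ (⊤ : ℕ∞) (itpd j f) := by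
  induction k generalizing f with
  | zero => exact hf
  | succ k ih => exact ih (hf.pd _) _

end PartialDerivatives

section TaylorCoordinates

variable {n : ℕ}

lemma rActG_zero (ψ : Gd n) : rActG ψ 0 = ψ := by
  obtain ⟨⟨φ, φinv, _, _, _, _⟩, hφ : φ 0 = 0⟩ := ψ
  apply Subtype.ext
  change Diffeo.mk _ _ _ _ _ _ = Diffeo.mk _ _ _ _ _ _
  congr <;> funext x <;> simp [hφ]

lemma Diffeo.contDiff_apply (ψ : Diffeo n) (i : Fin n) :
    ContDiff ℝ (⊤ : ℕ∞) (fun x => ψ.toFun x i) :=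
  contDiff_pi.1 ψ.smooth i

lemma betaGen_succ_rActG {k : ℕ} (j : Fin (k + 1) → Fin n) (i : Fin n) (ψ : Gd n)
    (b : Fin n → ℝ) :
    betaGen (k + 1) j i (rActG ψ b) = itpd j (fun x => ψ.val.toFun x i) b := by
  change itpd _ (pd _ fun x => ψ.val.toFun (x + b) i - ψ.val.toFun b i) 0 = _
  rw [pd_sub_const, pd_comp_add_right (f := fun x => ψ.val.toFun x i), itpd_comp_add_right]
  simp only [zero_add]
  rfl

lemma hasDerivAt_betaGen_succ_rActG (ℓ : Fin n) {k : ℕ} (j : Fin (k + 1) → Fin n) (i : Fin n)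
    (ψ : Gd n) :
    HasDerivAt (fun t : ℝ => betaGen (k + 1) j i (rActG ψ (t • eVec ℓ)))
      (betaGen (k + 2) (Fin.snoc j ℓ) i ψ) 0 := by
  set g := itpd j (fun x => ψ.val.toFun x i)
  have hg : DifferentiableAt ℝ g ((0 : ℝ) • eVec ℓ) :=
    ((ψ.val.contDiff_apply i).itpd j).differentiable (by simp) _
  have := hg.hasFDerivAt.comp_hasDerivAt (0 : ℝ) ((hasDerivAt_id 0).smul_const (eVec ℓ))
  simp only [betaGen_succ_rActG, zero_smul, one_smul] at this ⊢
  rwa [betaGen, itpd_snoc]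

lemma Diffeo.det_jacobian_ne_zero (ψ : Diffeo n) (x : Fin n → ℝ) :
    (Matrix.of fun i j => pd j (fun y => ψ.toFun y i) x).det ≠ 0 := by
  have hdiff : Differentiable ℝ ψ.toFun := ψ.smooth.differentiable (by simp)
  have hdiff_inv : Differentiable ℝ ψ.invFun := ψ.smooth_inv.differentiable (by simp)
  have hchain : (fderiv ℝ ψ.toFun x).comp (fderiv ℝ ψ.invFun (ψ.toFun x)) =
      ContinuousLinearMap.id ℝ _ := by
    have := fderiv_comp (ψ.toFun x) (ψ.left_inv x ▸ hdiff x) (hdiff_inv _)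
    rw [ψ.left_inv x, show ψ.toFun ∘ ψ.invFun = id from funext ψ.right_inv, fderiv_id] at this
    exact this.symm
  have hmatrix : (Matrix.of fun i j => pd j (fun y => ψ.toFun y i) x) =
      LinearMap.toMatrix' (fderiv ℝ ψ.toFun x : (Fin n → ℝ) →ₗ[ℝ] Fin n → ℝ) := by
    ext i j
    simp [pd, fderiv_apply (hdiff x), LinearMap.toMatrix'_apply]
  rw [hmatrix, LinearMap.det_toMatrix']
  refine left_ne_zero_of_mul_eq_one (b := LinearMap.det
    (fderiv ℝ ψ.invFun (ψ.toFun x) : (Fin n → ℝ) →ₗ[ℝ] Fin n → ℝ)) ?_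
  rw [← LinearMap.det_comp, ← ContinuousLinearMap.toLinearMap_comp, hchain,
    ContinuousLinearMap.coe_id, LinearMap.det_id]

lemma det_betaGen_one_apply (ψ : Gd n) :
    (Matrix.of fun i j => betaGen 1 (fun _ => j) i).det ψ =
      (Matrix.of fun i j => pd j (fun y => ψ.val.toFun y i) 0).det :=
  (Pi.evalRingHom (fun _ => ℝ) ψ).map_det (Matrix.of fun i j => betaGen 1 (fun _ => j) i)

lemma betaInv_eq_inv_det :
    (betaInv : Gd n → ℝ) = (Matrix.of fun i j => betaGen 1 (fun _ => j) i).det⁻¹ :=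
  funext fun ψ => congrArg Inv.inv (det_betaGen_one_apply ψ).symm

end TaylorCoordinates

section InfinitesimalTranslation

variable {n : ℕ}

noncomputable def translationSubalgebra (ℓ : Fin n) : Subalgebra ℝ (Gd n → ℝ) :=
  curveDerivSubalgebra (Falg n) (fun ψ t => rActG ψ (t • eVec ℓ)) fun ψ => by
    rw [zero_smul, rActG_zero]

lemma betaGen_mem_Falg {k : ℕ} (hk : 1 ≤ k) (j : Fin k → Fin n) (i : Fin n) :
    betaGen k j i ∈ Falg n :=
  Algebra.subset_adjoin (Or.inl ⟨k, hk, j, i, rfl⟩)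

lemma betaInv_mem_Falg : (betaInv : Gd n → ℝ) ∈ Falg n :=
  Algebra.subset_adjoin (Or.inr rfl)

lemma betaGen_succ_mem_translationSubalgebra (ℓ : Fin n) {k : ℕ} (j : Fin (k + 1) → Fin n)
    (i : Fin n) : betaGen (k + 1) j i ∈ translationSubalgebra ℓ :=
  ⟨betaGen_mem_Falg (by omega) j i, _, betaGen_mem_Falg (by omega) _ i,
    hasDerivAt_betaGen_succ_rActG ℓ j i⟩

lemma betaInv_mem_translationSubalgebra (ℓ : Fin n) :
    (betaInv : Gd n → ℝ) ∈ translationSubalgebra ℓ := by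
  have hdet := (translationSubalgebra ℓ).det_mem
    (M := Matrix.of fun i j => betaGen 1 (fun _ => j) i)
    fun i j => betaGen_succ_mem_translationSubalgebra ℓ (k := 0) (fun _ => j) i
  have hinv := betaInv_mem_Falg (n := n)
  rw [betaInv_eq_inv_det] at hinv ⊢
  exact inv_mem_curveDerivSubalgebra hdet (fun ψ => by
    rw [det_betaGen_one_apply]; exact ψ.val.det_jacobian_ne_zero 0) hinv

lemma Falg_le_translationSubalgebra (ℓ : Fin n) : Falg n ≤ translationSubalgebra ℓ := by
  refine Algebra.adjoin_le ?_
  rintro g (⟨k, hk, j, i, rfl⟩ | rfl)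
  · obtain ⟨k, rfl⟩ := Nat.exists_eq_add_of_le' hk
    exact betaGen_succ_mem_translationSubalgebra ℓ j i
  · exact betaInv_mem_translationSubalgebra ℓ

end InfinitesimalTranslation

/-- The algebra `F` is stable under the infinitesimal translation action: for `f ∈ F`
and `1 ≤ ℓ ≤ n`, the function `ψ ↦ (d/dt)|₀ f(ψ ◁ τ_{t·e_ℓ})` is well defined and again
belongs to `F`; on the generators it is given by `β^i_{j₁…j_k} ↦ β^i_{j₁…j_k ℓ}`. -/
theorem Falg_infinitesimal_translation_stable (n : ℕ) (ℓ : Fin n)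
    (f : Gd n → ℝ) (hf : f ∈ Falg n) :
    (∀ ψ : Gd n, ∃ d : ℝ,
        HasDerivAt (fun t : ℝ => f (rActG ψ (t • eVec ℓ))) d 0) ∧
    (fun ψ : Gd n =>
        deriv (fun t : ℝ => f (rActG ψ (t • eVec ℓ))) 0) ∈ Falg n ∧
    ∀ (k : ℕ), 1 ≤ k → ∀ (j : Fin k → Fin n) (i : Fin n),
      (fun ψ : Gd n =>
          deriv (fun t : ℝ => betaGen k j i (rActG ψ (t • eVec ℓ))) 0) =
        betaGen (k + 1) (Fin.snoc j ℓ) i := by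
  obtain ⟨-, f', hf'F, hf'⟩ := Falg_le_translationSubalgebra ℓ hf
  refine ⟨fun ψ => ⟨f' ψ, hf' ψ⟩, ?_, fun k hk j i => ?_⟩
  · convert hf'F using 1
    exact funext fun ψ => (hf' ψ).deriv
  · obtain ⟨k, rfl⟩ := Nat.exists_eq_add_of_le' hk
    exact funext fun ψ => (hasDerivAt_betaGen_succ_rActG ℓ j i ψ).deriv
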